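/- For every n ∈ ℤ and every smooth complex-valued function f on H, the operator identity −(n−1) L_{n+1}(L_{−1} f) − (n+1) L_{n−1}(L_{1} f) + 2n L_n(L_0 f) − 2 L_n f = 0 holds, where L_k = i e^{ikφ}(∂_φ − i k r ∂_r). -/

import Mathlib

/-- Partial derivative in the first (radial) variable. -/
noncomputable def pr (f : ℝ × ℝ → ℂ) : ℝ × ℝ → ℂ :=
  fun p => deriv (fun s : ℝ => f (s, p.2)) p.1

/-- Partial derivative in the second (angular) variable. -/
noncomputable def pphi (f : ℝ × ℝ → ℂ) : ℝ × ℝ → ℂ :=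
  fun p => deriv (fun t : ℝ => f (p.1, t)) p.2

/-- The super-rotation operator `L_n = i e^{inφ}(∂_φ - i n r ∂_r)`. -/
noncomputable def Lop (n : ℤ) (f : ℝ × ℝ → ℂ) : ℝ × ℝ → ℂ :=
  fun p => Complex.I * Complex.exp (Complex.I * n * p.2) *
    (pphi f p - Complex.I * n * (p.1 : ℂ) * pr f p)

open Complex

section Aux

variable {g f : ℝ × ℝ → ℂ}

lemma hasDerivAt_slice_r (hg : Differentiable ℝ g) (p : ℝ × ℝ) :
    HasDerivAt (fun s : ℝ => g (s, p.2)) (fderiv ℝ g p ((1 : ℝ), (0 : ℝ))) p.1 := by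
  have h1 : HasDerivAt (fun s : ℝ => ((s, p.2) : ℝ × ℝ)) ((1 : ℝ), (0 : ℝ)) p.1 :=
    (hasDerivAt_id p.1).prodMk (hasDerivAt_const _ _)
  exact (hg p).hasFDerivAt.comp_hasDerivAt p.1 h1

lemma hasDerivAt_slice_phi (hg : Differentiable ℝ g) (p : ℝ × ℝ) :
    HasDerivAt (fun t : ℝ => g (p.1, t)) (fderiv ℝ g p ((0 : ℝ), (1 : ℝ))) p.2 := by
  have h1 : HasDerivAt (fun t : ℝ => ((p.1, t) : ℝ × ℝ)) ((0 : ℝ), (1 : ℝ)) p.2 :=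
    (hasDerivAt_const _ _).prodMk (hasDerivAt_id p.2)
  exact (hg p).hasFDerivAt.comp_hasDerivAt p.2 h1

lemma pr_eq (hg : Differentiable ℝ g) (p : ℝ × ℝ) :
    pr g p = fderiv ℝ g p ((1 : ℝ), (0 : ℝ)) := (hasDerivAt_slice_r hg p).deriv

lemma pphi_eq (hg : Differentiable ℝ g) (p : ℝ × ℝ) :
    pphi g p = fderiv ℝ g p ((0 : ℝ), (1 : ℝ)) := (hasDerivAt_slice_phi hg p).deriv

lemma hasDerivAt_pr (hg : Differentiable ℝ g) (p : ℝ × ℝ) :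
    HasDerivAt (fun s : ℝ => g (s, p.2)) (pr g p) p.1 := by
  rw [pr_eq hg]; exact hasDerivAt_slice_r hg p

lemma hasDerivAt_pphi (hg : Differentiable ℝ g) (p : ℝ × ℝ) :
    HasDerivAt (fun t : ℝ => g (p.1, t)) (pphi g p) p.2 := by
  rw [pphi_eq hg]; exact hasDerivAt_slice_phi hg p

lemma contDiff_fderiv_apply (hf : ContDiff ℝ (⊤ : ℕ∞) f) (v : ℝ × ℝ) :
    ContDiff ℝ (⊤ : ℕ∞) fun p => fderiv ℝ f p v :=
  (hf.fderiv_right (by simp)).clm_apply contDiff_const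

lemma contDiff_pr (hf : ContDiff ℝ (⊤ : ℕ∞) f) : ContDiff ℝ (⊤ : ℕ∞) (pr f) := by
  have : pr f = fun p => fderiv ℝ f p ((1 : ℝ), (0 : ℝ)) :=
    funext fun p => pr_eq (hf.differentiable (by simp)) p
  rw [this]; exact contDiff_fderiv_apply hf _

lemma contDiff_pphi (hf : ContDiff ℝ (⊤ : ℕ∞) f) : ContDiff ℝ (⊤ : ℕ∞) (pphi f) := by
  have : pphi f = fun p => fderiv ℝ f p ((0 : ℝ), (1 : ℝ)) :=
    funext fun p => pphi_eq (hf.differentiable (by simp)) p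
  rw [this]; exact contDiff_fderiv_apply hf _

lemma fderiv_fderiv_apply (hf : ContDiff ℝ (⊤ : ℕ∞) f) (v w : ℝ × ℝ) (p : ℝ × ℝ) :
    fderiv ℝ (fun q => fderiv ℝ f q v) p w = fderiv ℝ (fderiv ℝ f) p w v := by
  have h2 : Differentiable ℝ (fderiv ℝ f) :=
    (hf.fderiv_right (m := (⊤ : ℕ∞)) (by simp)).differentiable (by simp)
  have h := ((ContinuousLinearMap.apply ℝ ℂ v).hasFDerivAt.comp p (h2 p).hasFDerivAt)
  have := h.fderiv
  calc fderiv ℝ (fun q => fderiv ℝ f q v) p w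
      = fderiv ℝ ((ContinuousLinearMap.apply ℝ ℂ v) ∘ fderiv ℝ f) p w := rfl
    _ = ((ContinuousLinearMap.apply ℝ ℂ v).comp (fderiv ℝ (fderiv ℝ f) p)) w := by
        rw [this]
    _ = fderiv ℝ (fderiv ℝ f) p w v := rfl

lemma mixed_symm (hf : ContDiff ℝ (⊤ : ℕ∞) f) (p : ℝ × ℝ) :
    pr (pphi f) p = pphi (pr f) p := by
  have hsym : IsSymmSndFDerivAt ℝ f p := hf.contDiffAt.isSymmSndFDerivAt (by rw [minSmoothness_of_isRCLikeNormedField]; exact WithTop.coe_le_coe.mpr (le_top : (2 : ℕ∞) ≤ ⊤))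
  have hpphi : pphi f = fun q => fderiv ℝ f q ((0 : ℝ), (1 : ℝ)) :=
    funext fun q => pphi_eq (hf.differentiable (by simp)) q
  have hpr : pr f = fun q => fderiv ℝ f q ((1 : ℝ), (0 : ℝ)) :=
    funext fun q => pr_eq (hf.differentiable (by simp)) q
  rw [pr_eq ((contDiff_pphi hf).differentiable (by simp)) p,
      pphi_eq ((contDiff_pr hf).differentiable (by simp)) p, hpphi, hpr,
      fderiv_fderiv_apply hf _ _ p, fderiv_fderiv_apply hf _ _ p]
  exact hsym _ _

lemma hasDerivAt_ofReal (s : ℝ) : HasDerivAt (fun t : ℝ => (t : ℂ)) 1 s := by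
  simpa using (hasDerivAt_id s).ofReal_comp

lemma pr_Lop (m : ℤ) (hf : ContDiff ℝ (⊤ : ℕ∞) f) (p : ℝ × ℝ) :
    pr (Lop m f) p = Complex.I * Complex.exp (Complex.I * m * p.2) *
      (pr (pphi f) p - Complex.I * m * pr f p
        - Complex.I * m * (p.1 : ℂ) * pr (pr f) p) := by
  have hA : HasDerivAt (fun s : ℝ => pphi f (s, p.2)) (pr (pphi f) p) p.1 :=
    hasDerivAt_pr ((contDiff_pphi hf).differentiable (by simp)) p
  have hB : HasDerivAt (fun s : ℝ => pr f (s, p.2)) (pr (pr f) p) p.1 :=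
    hasDerivAt_pr ((contDiff_pr hf).differentiable (by simp)) p
  have hs : HasDerivAt (fun s : ℝ => Complex.I * m * (s : ℂ)) (Complex.I * m) p.1 := by
    simpa using (hasDerivAt_ofReal p.1).const_mul (Complex.I * m)
  have h := ((hA.sub (hs.mul hB)).const_mul (Complex.I * Complex.exp (Complex.I * m * p.2)))
  have hd : deriv (fun s : ℝ => Lop m f (s, p.2)) p.1
      = Complex.I * Complex.exp (Complex.I * m * p.2) *
        (pr (pphi f) p - (Complex.I * m * pr f p
          + Complex.I * m * (p.1 : ℂ) * pr (pr f) p)) := h.deriv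
  show deriv (fun s : ℝ => Lop m f (s, p.2)) p.1 = _
  rw [hd]; ring

lemma pphi_Lop (m : ℤ) (hf : ContDiff ℝ (⊤ : ℕ∞) f) (p : ℝ × ℝ) :
    pphi (Lop m f) p = Complex.I * Complex.exp (Complex.I * m * p.2) *
      (Complex.I * m * pphi f p + (m : ℂ) * m * (p.1 : ℂ) * pr f p
        + pphi (pphi f) p - Complex.I * m * (p.1 : ℂ) * pphi (pr f) p) := by
  have hA : HasDerivAt (fun t : ℝ => pphi f (p.1, t)) (pphi (pphi f) p) p.2 :=
    hasDerivAt_pphi ((contDiff_pphi hf).differentiable (by simp)) p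
  have hB : HasDerivAt (fun t : ℝ => pr f (p.1, t)) (pphi (pr f) p) p.2 :=
    hasDerivAt_pphi ((contDiff_pr hf).differentiable (by simp)) p
  have hE : HasDerivAt (fun t : ℝ => Complex.I * Complex.exp (Complex.I * m * t))
      (Complex.I * (Complex.I * m * Complex.exp (Complex.I * m * p.2))) p.2 := by
    have h1 : HasDerivAt (fun t : ℝ => Complex.I * m * (t : ℂ)) (Complex.I * m) p.2 := by
      simpa using (hasDerivAt_ofReal p.2).const_mul (Complex.I * m)
    simpa [mul_comm] using (h1.cexp).const_mul Complex.I
  have h := hE.mul (hA.sub ((hasDerivAt_const p.2 (Complex.I * m * (p.1 : ℂ))).mul hB))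
  have hd : deriv (fun t : ℝ => Lop m f (p.1, t)) p.2 = _ := h.deriv
  show deriv (fun t : ℝ => Lop m f (p.1, t)) p.2 = _
  rw [hd]
  simp only [Pi.sub_apply, Pi.mul_apply, Prod.mk.eta]
  linear_combination (-(Complex.I) * (m : ℂ) * m * (p.1 : ℂ) *
    Complex.exp (Complex.I * m * p.2) * pr f p) * Complex.I_sq

end Aux

/-- For every `n ∈ ℤ` the operator identity
`-(n-1) L_{n+1}L_{-1} - (n+1) L_{n-1}L_1 + 2n L_n L_0 - 2 L_n = 0`
holds on smooth functions on the half-plane. -/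
theorem super_rotation_casimir_identity (n : ℤ) (f : ℝ × ℝ → ℂ)
    (hf : ContDiff ℝ (⊤ : ℕ∞) f) :
    ∀ p : ℝ × ℝ, 0 < p.1 →
      -((n : ℂ) - 1) * Lop (n + 1) (Lop (-1) f) p
        - ((n : ℂ) + 1) * Lop (n - 1) (Lop 1 f) p
        + 2 * (n : ℂ) * Lop n (Lop 0 f) p
        - 2 * Lop n f p = 0 := by
  intro p _
  have hsym := mixed_symm hf p
  simp only [Lop]
  rw [pr_Lop (-1) hf p, pphi_Lop (-1) hf p,
      pr_Lop 1 hf p, pphi_Lop 1 hf p,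
      pr_Lop 0 hf p, pphi_Lop 0 hf p, hsym]
  push_cast
  have e1 : Complex.exp (Complex.I * ((n : ℂ) + 1) * p.2)
      = Complex.exp (Complex.I * n * p.2) * Complex.exp (Complex.I * p.2) := by
    rw [← Complex.exp_add]; congr 1; ring
  have e2 : Complex.exp (Complex.I * ((n : ℂ) - 1) * p.2)
      = Complex.exp (Complex.I * n * p.2) * (Complex.exp (Complex.I * p.2))⁻¹ := by
    rw [← Complex.exp_neg, ← Complex.exp_add]; congr 1; ring
  have e3 : Complex.exp (Complex.I * (-1 : ℂ) * p.2) = (Complex.exp (Complex.I * p.2))⁻¹ := by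
    rw [← Complex.exp_neg]; congr 1; ring
  have e4 : Complex.exp (Complex.I * (1 : ℂ) * p.2) = Complex.exp (Complex.I * p.2) := by
    congr 1; ring
  have e5 : Complex.exp (Complex.I * (0 : ℂ) * p.2) = 1 := by
    norm_num
  rw [e1, e2, e3, e4, e5]
  have huv : Complex.exp (Complex.I * p.2) * (Complex.exp (Complex.I * p.2))⁻¹ = 1 :=
    mul_inv_cancel₀ (Complex.exp_ne_zero _)
  linear_combination
    ((-2 : ℂ) * (n : ℂ) * Complex.I ^ 2 * Complex.exp (Complex.I * (n : ℂ) * p.2) * p.1 * pr f p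
      + (-2 : ℂ) * (n : ℂ) * Complex.I ^ 2 * Complex.exp (Complex.I * (n : ℂ) * p.2) * pphi (pphi f) p
      + 2 * (n : ℂ) ^ 2 * Complex.I ^ 3 * Complex.exp (Complex.I * (n : ℂ) * p.2) * p.1 * pphi (pr f) p
      + (-2 : ℂ) * Complex.I ^ 3 * Complex.exp (Complex.I * (n : ℂ) * p.2) * pphi f p) * huv
    + ((-2 : ℂ) * Complex.I * Complex.exp (Complex.I * (n : ℂ) * p.2) * pphi f p) * Complex.I_sq
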